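/- arXiv:2006.10672 — 3 statements merged into one kernel-verified Lean document; each statement's English description precedes it below -/
import Mathlib

section
/- Let d ≥ 1, let q ≥ 1 be an integer, and let x ∈ ℝ^d with x_max = max_i |x_i|, x_min = min_i |x_i| and x_max > x_min. For each i set u_i = (|x_i| − x_min)/(x_max − x_min), let l_i be an integer with 0 ≤ l_i ≤ q−1 and l_i/q ≤ u_i ≤ (l_i+1)/q, and p_i = q·u_i − l_i. Then the expected squared Euclidean norm of the quantized vector satisfies Σ_{i=1}^d [ (1−p_i)·(sign(x_i)·(x_min + (x_max−x_min)·l_i/q))² + p_i·(sign(x_i)·(x_min + (x_max−x_min)·(l_i+1)/q))² ] ≤ Σ_{i=1}^d x_i² + d·(x_max − x_min)²/(4q²); equivalently, E‖Q(x,q)‖₂² ≤ ‖x‖₂² + ε·d·‖x‖₂²/(4q²) where ε = (x_max − x_min)²/‖x‖₂². -/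
/-!
Write `Δ = x_max − x_min`. Coordinate `i` is rounded in magnitude to one of the grid points
`a = x_min + Δ l_i/q` and `a + Δ/q`, with probabilities `1 − p_i` and `p_i`, and the mean of
this two-point law is exactly `|x_i|`. Its second moment is therefore
`x_i² + p_i(1 − p_i)(Δ/q)²`, and `p(1 − p) ≤ 1/4`; the sign factor only shrinks the result.
Summing over the `d` coordinates gives the bound.
-/

namespace Real

lemma sign_sq_le_one (t : ℝ) : sign t ^ 2 ≤ 1 := by
  rcases sign_apply_eq t with h | h | h <;> simp [h]

end Real

lemma mul_one_sub_le_quarter (p : ℝ) : p * (1 - p) ≤ 1 / 4 := by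
  nlinarith [sq_nonneg (p - 1 / 2)]

lemma two_point_second_moment (a h p : ℝ) :
    (1 - p) * a ^ 2 + p * (a + h) ^ 2 = (a + p * h) ^ 2 + p * (1 - p) * h ^ 2 := by
  ring

lemma two_point_second_moment_le (a h p : ℝ) :
    (1 - p) * a ^ 2 + p * (a + h) ^ 2 ≤ (a + p * h) ^ 2 + h ^ 2 / 4 := by
  have hvar : p * (1 - p) * h ^ 2 ≤ 1 / 4 * h ^ 2 :=
    mul_le_mul_of_nonneg_right (mul_one_sub_le_quarter p) (sq_nonneg h)
  rw [two_point_second_moment]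
  linarith

lemma quantize_coord_second_moment_le {q : ℕ} (hq : 1 ≤ q) {t xmax xmin u p : ℝ} {l : ℕ}
    (hlt : xmin < xmax) (hu : u = (|t| - xmin) / (xmax - xmin))
    (hl1 : (l : ℝ) / q ≤ u) (hl2 : u ≤ ((l : ℝ) + 1) / q) (hp : p = q * u - l) :
    (1 - p) * (Real.sign t * (xmin + (xmax - xmin) * ((l : ℝ) / q))) ^ 2
        + p * (Real.sign t * (xmin + (xmax - xmin) * (((l : ℝ) + 1) / q))) ^ 2
      ≤ t ^ 2 + (xmax - xmin) ^ 2 / (4 * q ^ 2) := by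
  have hq₀ : (0 : ℝ) < q := by exact_mod_cast hq
  have hΔ : xmax - xmin ≠ 0 := (sub_pos.2 hlt).ne'
  have hp₀ : 0 ≤ p := by
    have := (div_le_iff₀ hq₀).1 hl1
    linarith
  have hp₁ : p ≤ 1 := by
    have := (le_div_iff₀ hq₀).1 hl2
    linarith
  set a := xmin + (xmax - xmin) * ((l : ℝ) / q)
  set h := (xmax - xmin) / q
  have hupper : xmin + (xmax - xmin) * (((l : ℝ) + 1) / q) = a + h := by ring
  have hmean : a + p * h = |t| := by
    simp only [a, h, hp, hu]
    field_simp
    ring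
  have hmoment : (1 - p) * a ^ 2 + p * (a + h) ^ 2 ≤ t ^ 2 + (xmax - xmin) ^ 2 / (4 * q ^ 2) := by
    calc (1 - p) * a ^ 2 + p * (a + h) ^ 2 ≤ (a + p * h) ^ 2 + h ^ 2 / 4 :=
          two_point_second_moment_le a h p
      _ = t ^ 2 + (xmax - xmin) ^ 2 / (4 * q ^ 2) := by
          rw [hmean, sq_abs]
          ring
  have hnonneg : 0 ≤ (1 - p) * a ^ 2 + p * (a + h) ^ 2 := by
    have := sub_nonneg.2 hp₁
    positivity
  rw [hupper]
  calc (1 - p) * (Real.sign t * a) ^ 2 + p * (Real.sign t * (a + h)) ^ 2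
      = Real.sign t ^ 2 * ((1 - p) * a ^ 2 + p * (a + h) ^ 2) := by ring
    _ ≤ (1 - p) * a ^ 2 + p * (a + h) ^ 2 := mul_le_of_le_one_left hnonneg (Real.sign_sq_le_one t)
    _ ≤ t ^ 2 + (xmax - xmin) ^ 2 / (4 * q ^ 2) := hmoment

theorem stmt_2_general (d q : ℕ) (hq : 1 ≤ q)
    (x : Fin d → ℝ) (xmax xmin : ℝ)
    (hlt : xmin < xmax)
    (u : Fin d → ℝ) (hu : ∀ i, u i = (|x i| - xmin) / (xmax - xmin))
    (l : Fin d → ℕ)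
    (hl1 : ∀ i, (l i : ℝ) / q ≤ u i) (hl2 : ∀ i, u i ≤ ((l i : ℝ) + 1) / q)
    (p : Fin d → ℝ) (hp : ∀ i, p i = q * u i - l i) :
    ∑ i, ((1 - p i) * (Real.sign (x i) * (xmin + (xmax - xmin) * ((l i : ℝ) / q))) ^ 2
          + p i * (Real.sign (x i) * (xmin + (xmax - xmin) * (((l i : ℝ) + 1) / q))) ^ 2)
      ≤ ∑ i, x i ^ 2 + (d : ℝ) * (xmax - xmin) ^ 2 / (4 * q ^ 2) := by
  calc _ ≤ ∑ i, (x i ^ 2 + (xmax - xmin) ^ 2 / (4 * q ^ 2)) :=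
        Finset.sum_le_sum fun i _ =>
          quantize_coord_second_moment_le hq hlt (hu i) (hl1 i) (hl2 i) (hp i)
    _ = ∑ i, x i ^ 2 + (d : ℝ) * (xmax - xmin) ^ 2 / (4 * q ^ 2) := by
        rw [Finset.sum_add_distrib, Finset.sum_const, Finset.card_univ, Fintype.card_fin,
          nsmul_eq_mul]
        ring

/-- second-moment bound for the stochastic quantizer,
E‖Q(x,q)‖₂² ≤ ‖x‖₂² + ε·d·‖x‖₂²/(4q²) with ε = (x_max − x_min)²/‖x‖₂². -/
theorem stmt_2 (d q : ℕ) (hd : 1 ≤ d) (hq : 1 ≤ q)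
    (x : Fin d → ℝ) (xmax xmin : ℝ)
    (hmax : IsGreatest (Set.range fun i => |x i|) xmax)
    (hmin : IsLeast (Set.range fun i => |x i|) xmin)
    (hlt : xmin < xmax)
    (u : Fin d → ℝ) (hu : ∀ i, u i = (|x i| - xmin) / (xmax - xmin))
    (l : Fin d → ℕ) (hl : ∀ i, l i ≤ q - 1)
    (hl1 : ∀ i, (l i : ℝ) / q ≤ u i) (hl2 : ∀ i, u i ≤ ((l i : ℝ) + 1) / q)
    (p : Fin d → ℝ) (hp : ∀ i, p i = q * u i - l i) :
    ∑ i, ((1 - p i) * (Real.sign (x i) * (xmin + (xmax - xmin) * ((l i : ℝ) / q))) ^ 2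
          + p i * (Real.sign (x i) * (xmin + (xmax - xmin) * (((l i : ℝ) + 1) / q))) ^ 2)
      ≤ ∑ i, x i ^ 2 + (d : ℝ) * (xmax - xmin) ^ 2 / (4 * q ^ 2) :=
  stmt_2_general d q hq x xmax xmin hlt u hu l hl1 hl2 p hp
end

section
/- Let (Ω, 𝒜, P) be a probability space, let d, M, τ ≥ 1, G ≥ 0, η_prev ∈ ℝ, ε ∈ [0,1], q₁ ≥ 1, and let w_1, …, w_M be nonnegative reals with Σ_m w_m = 1. Let θ, θ̂, θ̂_prev : Ω → ℝ^d and g_{m,i} : Ω → ℝ^d (m ∈ {1,…,M}, i ∈ {1,…,τ}) be random vectors (all integrands appearing below integrable) such that: (i) θ = θ̂_prev − η_prev Σ_{m=1}^M w_m Σ_{i=1}^τ g_{m,i} P-almost surely; (ii) E[‖g_{m,i}‖²] ≤ G² for all m, i; (iii) E[θ̂] = E[θ]; and (iv) E[‖θ̂‖²] ≤ E[‖θ‖²] + (ε d/(4 q₁²)) · E[‖θ − θ̂_prev‖²]. Then for every θ* ∈ ℝ^d: E[‖θ̂ − θ*‖²] ≤ E[‖θ − θ*‖²] + (η_prev τ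 G/(2 q₁))² · ε d. -/
open MeasureTheory

/-
Expanding the square, `E‖X - θ*‖² = E‖X‖² - 2⟪θ*, E X⟫ + ‖θ*‖²`; since `θ̂` and `θ` have the same
mean, the difference of the two sides of the claim is `E‖θ̂‖² - E‖θ‖²`, which (iv) bounds by
`εd/(4q₁²) · E‖θ - θ̂_prev‖²`. By (i), `θ - θ̂_prev` is `-η_prev` times a convex combination of sums
of `τ` gradients, so Jensen's inequality for `‖·‖²` and Cauchy–Schwarz give
`E‖θ - θ̂_prev‖² ≤ η_prev² τ² G²`.
-/

lemma norm_sum_smul_sq_le {ι E : Type*} [SeminormedAddCommGroup E] [NormedSpace ℝ E]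
    {s : Finset ι} {w : ι → ℝ} (hw : ∀ i ∈ s, 0 ≤ w i) (hw1 : ∑ i ∈ s, w i = 1) (v : ι → E) :
    ‖∑ i ∈ s, w i • v i‖ ^ 2 ≤ ∑ i ∈ s, w i * ‖v i‖ ^ 2 :=
  (convexOn_univ_norm.pow (fun _ _ => norm_nonneg _) 2).map_sum_le hw hw1
    (fun _ _ => Set.mem_univ _)

lemma norm_sum_sq_le_card_mul {ι E : Type*} [SeminormedAddCommGroup E] (s : Finset ι)
    (u : ι → E) : ‖∑ i ∈ s, u i‖ ^ 2 ≤ s.card * ∑ i ∈ s, ‖u i‖ ^ 2 :=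
  (pow_le_pow_left₀ (norm_nonneg _) (norm_sum_le _ _) 2).trans sq_sum_le_card_mul_sum_sq

lemma norm_sum_smul_sum_sq_le {ι κ E : Type*} [SeminormedAddCommGroup E] [NormedSpace ℝ E]
    {s : Finset ι} {w : ι → ℝ} (hw : ∀ m ∈ s, 0 ≤ w m) (hw1 : ∑ m ∈ s, w m = 1)
    (t : Finset κ) (u : ι → κ → E) :
    ‖∑ m ∈ s, w m • ∑ i ∈ t, u m i‖ ^ 2 ≤ t.card * ∑ m ∈ s, w m * ∑ i ∈ t, ‖u m i‖ ^ 2 :=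
  calc ‖∑ m ∈ s, w m • ∑ i ∈ t, u m i‖ ^ 2
      ≤ ∑ m ∈ s, w m * ‖∑ i ∈ t, u m i‖ ^ 2 := norm_sum_smul_sq_le hw hw1 _
    _ ≤ ∑ m ∈ s, w m * (t.card * ∑ i ∈ t, ‖u m i‖ ^ 2) := by
      gcongr with m hm
      · exact hw m hm
      · exact norm_sum_sq_le_card_mul t _
    _ = t.card * ∑ m ∈ s, w m * ∑ i ∈ t, ‖u m i‖ ^ 2 := by
      rw [Finset.mul_sum]
      exact Finset.sum_congr rfl fun m _ => mul_left_comm _ _ _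

lemma integral_norm_smul_sum_smul_sum_sq_le {Ω ι κ E : Type*} [MeasurableSpace Ω]
    {P : Measure Ω} [SeminormedAddCommGroup E] [NormedSpace ℝ E] [Fintype ι] [Fintype κ]
    {w : ι → ℝ} (hw : ∀ m, 0 ≤ w m) (hw1 : ∑ m, w m = 1) {g : ι → κ → Ω → E} {G : ℝ}
    (hg2int : ∀ m i, Integrable (fun ω => ‖g m i ω‖ ^ 2) P)
    (hgbound : ∀ m i, ∫ ω, ‖g m i ω‖ ^ 2 ∂P ≤ G ^ 2) (η : ℝ) :
    ∫ ω, ‖η • ∑ m, w m • ∑ i, g m i ω‖ ^ 2 ∂P ≤ (η * Fintype.card κ * G) ^ 2 := by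
  set τ : ℝ := (Fintype.card κ : ℝ)
  have hmajorant_int : Integrable (fun ω => η ^ 2 * (τ * ∑ m, w m * ∑ i, ‖g m i ω‖ ^ 2)) P :=
    ((integrable_finsetSum _ fun m _ =>
      (integrable_finsetSum _ fun i _ => hg2int m i).const_mul _).const_mul _).const_mul _
  calc ∫ ω, ‖η • ∑ m, w m • ∑ i, g m i ω‖ ^ 2 ∂P
      ≤ ∫ ω, η ^ 2 * (τ * ∑ m, w m * ∑ i, ‖g m i ω‖ ^ 2) ∂P := by
        refine integral_mono_of_nonneg (.of_forall fun _ => by positivity) hmajorant_int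
          (.of_forall fun ω => ?_)
        simp only [norm_smul, mul_pow, Real.norm_eq_abs, sq_abs]
        gcongr
        exact norm_sum_smul_sum_sq_le (fun m _ => hw m) hw1 _ _
    _ = η ^ 2 * (τ * ∑ m, w m * ∑ i, ∫ ω, ‖g m i ω‖ ^ 2 ∂P) := by
        rw [integral_const_mul, integral_const_mul, integral_finsetSum _ fun m _ =>
          (integrable_finsetSum _ fun i _ => hg2int m i).const_mul _]
        simp_rw [integral_const_mul, integral_finsetSum _ fun i _ => hg2int _ i]
    _ ≤ η ^ 2 * (τ * ∑ m, w m * ∑ _i : κ, G ^ 2) := by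
        gcongr with m _ i _
        · exact hw m
        · exact hgbound m i
    _ = (η * τ * G) ^ 2 := by
        simp only [Finset.sum_const, Finset.card_univ, nsmul_eq_mul, ← Finset.sum_mul, hw1]
        ring

lemma integral_norm_sub_const_sq {Ω E : Type*} [MeasurableSpace Ω] {P : Measure Ω}
    [IsProbabilityMeasure P] [NormedAddCommGroup E] [InnerProductSpace ℝ E] [CompleteSpace E]
    {X : Ω → E} (hX : Integrable X P) (hX2 : Integrable (fun ω => ‖X ω‖ ^ 2) P) (c : E) :
    ∫ ω, ‖X ω - c‖ ^ 2 ∂P = ∫ ω, ‖X ω‖ ^ 2 ∂P - 2 * inner ℝ c (∫ ω, X ω ∂P) + ‖c‖ ^ 2 := by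
  have hinner : Integrable (fun ω => 2 * inner ℝ c (X ω)) P := (hX.const_inner c).const_mul 2
  simp_rw [norm_sub_sq_real, real_inner_comm c]
  rw [integral_add (by exact hX2.sub hinner) (integrable_const _), integral_sub hX2 hinner,
    integral_const_mul, integral_inner hX, integral_const, probReal_univ, one_smul]

theorem stmt_14_general {Ω : Type*} [MeasurableSpace Ω] (P : Measure Ω) [IsProbabilityMeasure P]
    (d M τ : ℕ)
    (G : ℝ) (ηprev : ℝ)
    (ε : ℝ) (hε0 : 0 ≤ ε)
    (q₁ : ℕ)
    (w : Fin M → ℝ) (hw : ∀ m, 0 ≤ w m) (hw1 : ∑ m, w m = 1)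
    (θ θh θhp : Ω → EuclideanSpace ℝ (Fin d))
    (g : Fin M → Fin τ → Ω → EuclideanSpace ℝ (Fin d))
    -- integrability of all integrands appearing below
    (hθint : Integrable θ P) (hθhint : Integrable θh P)
    (hθ2int : Integrable (fun ω => ‖θ ω‖ ^ 2) P)
    (hθh2int : Integrable (fun ω => ‖θh ω‖ ^ 2) P)
    (hg2int : ∀ m i, Integrable (fun ω => ‖g m i ω‖ ^ 2) P)
    -- (i) the global model is obtained from the weighted local updates
    (hmodel : ∀ᵐ ω ∂P, θ ω = θhp ω - ηprev • ∑ m, w m • ∑ i, g m i ω)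
    -- (ii) bounded second moments of the stochastic gradients
    (hgbound : ∀ m i, ∫ ω, ‖g m i ω‖ ^ 2 ∂P ≤ G ^ 2)
    -- (iii) unbiasedness of the quantized estimate
    (hmean : ∫ ω, θh ω ∂P = ∫ ω, θ ω ∂P)
    -- (iv) second-moment bound of the quantized estimate
    (hsec : ∫ ω, ‖θh ω‖ ^ 2 ∂P
      ≤ ∫ ω, ‖θ ω‖ ^ 2 ∂P + ε * d / (4 * q₁ ^ 2) * ∫ ω, ‖θ ω - θhp ω‖ ^ 2 ∂P) :
    ∀ θstar : EuclideanSpace ℝ (Fin d),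
      ∫ ω, ‖θh ω - θstar‖ ^ 2 ∂P
        ≤ ∫ ω, ‖θ ω - θstar‖ ^ 2 ∂P + (ηprev * τ * G / (2 * q₁)) ^ 2 * (ε * d) := by
  intro θstar
  have hupdate : ∫ ω, ‖θ ω - θhp ω‖ ^ 2 ∂P ≤ (ηprev * τ * G) ^ 2 := by
    rw [integral_congr_ae (hmodel.mono fun ω hω => by
      rw [hω, sub_sub_cancel_left, norm_neg])]
    simpa using integral_norm_smul_sum_smul_sum_sq_le hw hw1 hg2int hgbound ηprev
  rw [integral_norm_sub_const_sq hθhint hθh2int, integral_norm_sub_const_sq hθint hθ2int, hmean]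
  have hquant : ε * d / (4 * q₁ ^ 2) * ∫ ω, ‖θ ω - θhp ω‖ ^ 2 ∂P
      ≤ (ηprev * τ * G / (2 * q₁)) ^ 2 * (ε * d) :=
    calc _ ≤ ε * d / (4 * q₁ ^ 2) * (ηprev * τ * G) ^ 2 := by gcongr
      _ = (ηprev * τ * G / (2 * q₁)) ^ 2 * (ε * d) := by ring
  linarith

/-- lemma bounding E‖θ̂ − θ*‖² via E‖θ − θ*‖² plus the quantization term. -/
theorem stmt_14 {Ω : Type*} [MeasurableSpace Ω] (P : Measure Ω) [IsProbabilityMeasure P]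
    (d M τ : ℕ) (hd : 1 ≤ d) (hM : 1 ≤ M) (hτ : 1 ≤ τ)
    (G : ℝ) (hG : 0 ≤ G) (ηprev : ℝ)
    (ε : ℝ) (hε0 : 0 ≤ ε) (hε1 : ε ≤ 1)
    (q₁ : ℕ) (hq₁ : 1 ≤ q₁)
    (w : Fin M → ℝ) (hw : ∀ m, 0 ≤ w m) (hw1 : ∑ m, w m = 1)
    (θ θh θhp : Ω → EuclideanSpace ℝ (Fin d))
    (g : Fin M → Fin τ → Ω → EuclideanSpace ℝ (Fin d))
    -- integrability of all integrands appearing below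
    (hθint : Integrable θ P) (hθhint : Integrable θh P) (hθhpint : Integrable θhp P)
    (hθ2int : Integrable (fun ω => ‖θ ω‖ ^ 2) P)
    (hθh2int : Integrable (fun ω => ‖θh ω‖ ^ 2) P)
    (hdiff2int : Integrable (fun ω => ‖θ ω - θhp ω‖ ^ 2) P)
    (hg2int : ∀ m i, Integrable (fun ω => ‖g m i ω‖ ^ 2) P)
    -- (i) the global model is obtained from the weighted local updates
    (hmodel : ∀ᵐ ω ∂P, θ ω = θhp ω - ηprev • ∑ m, w m • ∑ i, g m i ω)
    -- (ii) bounded second moments of the stochastic gradients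
    (hgbound : ∀ m i, ∫ ω, ‖g m i ω‖ ^ 2 ∂P ≤ G ^ 2)
    -- (iii) unbiasedness of the quantized estimate
    (hmean : ∫ ω, θh ω ∂P = ∫ ω, θ ω ∂P)
    -- (iv) second-moment bound of the quantized estimate
    (hsec : ∫ ω, ‖θh ω‖ ^ 2 ∂P
      ≤ ∫ ω, ‖θ ω‖ ^ 2 ∂P + ε * d / (4 * q₁ ^ 2) * ∫ ω, ‖θ ω - θhp ω‖ ^ 2 ∂P) :
    ∀ θstar : EuclideanSpace ℝ (Fin d),
      ∫ ω, ‖θh ω - θstar‖ ^ 2 ∂P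
        ≤ ∫ ω, ‖θ ω - θstar‖ ^ 2 ∂P + (ηprev * τ * G / (2 * q₁)) ^ 2 * (ε * d) :=
  stmt_14_general P d M τ G ηprev ε hε0 q₁ w hw hw1 θ θh θhp g hθint hθhint hθ2int hθh2int hg2int
    hmodel hgbound hmean hsec
end

section
/- (Theorem 1, convergence of the LFL algorithm with accurate local updates.) Let (Ω, 𝒜, P) be a probability space, let d, M ≥ 1, τ ≥ 1, μ > 0, G ≥ 0, ε ∈ [0,1], q₁ ≥ 1, let w_1, …, w_M be nonnegative reals with Σ_m w_m = 1, and let η : ℕ → ℝ satisfy 0 < η(t) ≤ min{1, 1/(μτ)} for all t. Let F_m : ℝ^d → ℝ and G_m : ℝ^d → ℝ^d satisfy the μ-strong-convexity inequality 2(F_m(v) − F_m(w)) ≥ 2⟨v − w, G_m(w)⟩ + μ‖v − w‖² for all v, w ∈ ℝ^d and all m; set F = Σ_m w_m F_m, let θ* be a global minimizer of F with F* = F(θ*), suppose F_m* ≤ F_m(v) for all v and m, and set Γ = F* − Σ_m w_m F_m*. Let θ(t), θ̂(t) : Ω → ℝ^d and g_{m,i}(t) : Ω → ℝ^d (m ∈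 {1,…,M}, i ∈ {1,…,τ}, t ∈ ℕ) be random vectors (all integrands appearing below integrable) such that: (i) θ(0) is deterministic and θ̂(0) = θ(0); (ii) the local iterates are θ_m^i(t) = θ̂(t) − η(t) Σ_{j=1}^{i−1} g_{m,j}(t) and the global update is θ(t+1) = θ̂(t) − η(t) Σ_{m=1}^M w_m Σ_{i=1}^τ g_{m,i}(t) P-almost surely; (iii) E[‖g_{m,i}(t)‖²] ≤ G² for all m, i, t; (iv) the unbiasedness identities E[⟨θ* − θ_m^i(t), g_{m,i}(t)⟩] = E[⟨θ* − θ_m^i(t), G_m(θ_m^i(t))⟩] hold for all m, i, t; and (v) for every t ≥ 1 (quantized broadcasting): E[θ̂(t)] = E[θ(t)] and E[‖θ̂(t)‖²] ≤ E[‖θ(t)‖²] + (ε d/(4 q₁²)) · E[‖θ(t) − θ̂(t−1)‖²]. Then for every t ≥ 1: E[‖θ(t) − θ*‖²] ≤ (Π_{i=0}^{t−1} A(i)) · ‖θ(0) − θ*‖² + Σ_{j=0}^{t−1} B(j) · Π_{i=j+1}^{t−1} A(i), where A(i) = 1 − μη(i)(τ − η(i)(τ − 1)), B(j) = A(j)·(η(j−1)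 τ G/(2 q₁))²·ε d + η(j)²(τ² + τ − 1)G² + (1 + μ(1 − η(j))) η(j)² G² τ(τ−1)(2τ−1)/6 + 2η(j)(τ − 1)Γ for j ≥ 1, and B(0) is given by the same formula with the first (quantization-error) term replaced by 0 (since θ̂(0) = θ(0)); empty products equal 1. -/
set_option maxHeartbeats 1600000

open MeasureTheory Finset
open scoped InnerProductSpace

section LFLHelpers

variable {E : Type*} [NormedAddCommGroup E] [InnerProductSpace ℝ E] {ι : Type*}

lemma lfl_sq_norm_sum_le (s : Finset ι) (f : ι → E) :
    ‖∑ i ∈ s, f i‖ ^ 2 ≤ (s.card : ℝ) * ∑ i ∈ s, ‖f i‖ ^ 2 :=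
  calc ‖∑ i ∈ s, f i‖ ^ 2 ≤ (∑ i ∈ s, ‖f i‖) ^ 2 :=
        pow_le_pow_left₀ (norm_nonneg _) (norm_sum_le s f) 2
    _ ≤ (s.card : ℝ) * ∑ i ∈ s, ‖f i‖ ^ 2 := sq_sum_le_card_mul_sum_sq

lemma lfl_sq_norm_wsum_le (s : Finset ι) (w : ι → ℝ) (hw : ∀ i, 0 ≤ w i)
    (hw1 : ∑ i ∈ s, w i = 1) (f : ι → E) :
    ‖∑ i ∈ s, w i • f i‖ ^ 2 ≤ ∑ i ∈ s, w i * ‖f i‖ ^ 2 := by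
  have h1 : ‖∑ i ∈ s, w i • f i‖ ≤ ∑ i ∈ s, w i * ‖f i‖ := by
    refine (norm_sum_le _ _).trans (Finset.sum_le_sum fun i _ => ?_)
    rw [norm_smul, Real.norm_eq_abs, abs_of_nonneg (hw i)]
  have h2 : (∑ i ∈ s, w i * ‖f i‖) ^ 2
      ≤ (∑ i ∈ s, w i) * ∑ i ∈ s, w i * ‖f i‖ ^ 2 := by
    calc (∑ i ∈ s, w i * ‖f i‖) ^ 2
        = (∑ i ∈ s, Real.sqrt (w i) * (Real.sqrt (w i) * ‖f i‖)) ^ 2 := by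
          congr 1
          refine Finset.sum_congr rfl fun i _ => ?_
          rw [← mul_assoc, Real.mul_self_sqrt (hw i)]
      _ ≤ (∑ i ∈ s, Real.sqrt (w i) ^ 2) * ∑ i ∈ s, (Real.sqrt (w i) * ‖f i‖) ^ 2 :=
          sum_mul_sq_le_sq_mul_sq s _ _
      _ = (∑ i ∈ s, w i) * ∑ i ∈ s, w i * ‖f i‖ ^ 2 := by
          congr 1
          · exact Finset.sum_congr rfl fun i _ => Real.sq_sqrt (hw i)
          · refine Finset.sum_congr rfl fun i _ => ?_
            rw [mul_pow, Real.sq_sqrt (hw i)]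
  calc ‖∑ i ∈ s, w i • f i‖ ^ 2 ≤ (∑ i ∈ s, w i * ‖f i‖) ^ 2 :=
        pow_le_pow_left₀ (norm_nonneg _) h1 2
    _ ≤ _ := by rw [hw1, one_mul] at h2; exact h2

lemma lfl_two_inner_le (x y : E) : 2 * ⟪x, y⟫_ℝ ≤ ‖x‖ ^ 2 + ‖y‖ ^ 2 := by
  have h := real_inner_le_norm x y
  nlinarith [sq_nonneg (‖x‖ - ‖y‖)]

lemma lfl_interp (μ e : ℝ) (hμ : 0 ≤ μ) (he0 : 0 ≤ e) (he1 : e ≤ 1) (x y : E) :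
    μ * e * (1 - e) * ‖y‖ ^ 2 ≤ μ * e * ‖x‖ ^ 2 + μ * (1 - e) * ‖x - y‖ ^ 2 := by
  have hb : ‖y‖ ≤ ‖x‖ + ‖x - y‖ := by
    calc ‖y‖ = ‖x - (x - y)‖ := by rw [sub_sub_cancel]
      _ ≤ ‖x‖ + ‖x - y‖ := norm_sub_le _ _
  have h2 : e * (1 - e) * ‖y‖ ^ 2 ≤ e * ‖x‖ ^ 2 + (1 - e) * ‖x - y‖ ^ 2 := by
    have h3 : ‖y‖ ^ 2 ≤ (‖x‖ + ‖x - y‖) ^ 2 := by nlinarith [norm_nonneg y]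
    have h4 := mul_le_mul_of_nonneg_left h3 (mul_nonneg he0 (sub_nonneg.2 he1))
    nlinarith [h4, sq_nonneg (e * ‖x‖ - (1 - e) * ‖x - y‖)]
  calc μ * e * (1 - e) * ‖y‖ ^ 2 = μ * (e * (1 - e) * ‖y‖ ^ 2) := by ring
    _ ≤ μ * (e * ‖x‖ ^ 2 + (1 - e) * ‖x - y‖ ^ 2) := mul_le_mul_of_nonneg_left h2 hμ
    _ = μ * e * ‖x‖ ^ 2 + μ * (1 - e) * ‖x - y‖ ^ 2 := by ring

lemma lfl_sum_sq (τ : ℕ) :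
    ∑ i ∈ Icc 1 τ, ((i : ℝ) - 1) ^ 2
      = (τ : ℝ) * ((τ : ℝ) - 1) * (2 * (τ : ℝ) - 1) / 6 := by
  induction τ with
  | zero => simp
  | succ n ih =>
    rw [Finset.sum_Icc_succ_top (Nat.le_add_left 1 n), ih]
    push_cast
    ring

lemma lfl_sum_split (τ : ℕ) (hτ : 1 ≤ τ) (f : ℕ → ℝ) :
    ∑ i ∈ Icc 1 τ, f i = f 1 + ∑ i ∈ Icc 2 τ, f i := by
  have h : Ioc 1 τ = Icc 2 τ := by ext x; simp only [mem_Ioc, mem_Icc]; omega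
  rw [Finset.Icc_eq_cons_Ioc hτ, Finset.sum_cons, h]

end LFLHelpers

open MeasureTheory Finset
open scoped InnerProductSpace

/-- Theorem 1, convergence of the LFL algorithm with accurate local updates. -/
theorem stmt_17 {Ω : Type*} [MeasurableSpace Ω] (P : Measure Ω) [IsProbabilityMeasure P]
    (d M τ : ℕ) (hd : 1 ≤ d) (hM : 1 ≤ M) (hτ : 1 ≤ τ)
    (μ G ε : ℝ) (hμ : 0 < μ) (hG : 0 ≤ G) (hε0 : 0 ≤ ε) (hε1 : ε ≤ 1)
    (q₁ : ℕ) (hq₁ : 1 ≤ q₁)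
    (w : Fin M → ℝ) (hw : ∀ m, 0 ≤ w m) (hw1 : ∑ m, w m = 1)
    (η : ℕ → ℝ) (hη0 : ∀ t, 0 < η t) (hη1 : ∀ t, η t ≤ 1)
    (hη2 : ∀ t, η t ≤ 1 / (μ * τ))
    (F : Fin M → EuclideanSpace ℝ (Fin d) → ℝ)
    (Gm : Fin M → EuclideanSpace ℝ (Fin d) → EuclideanSpace ℝ (Fin d))
    (hsc : ∀ m (v u : EuclideanSpace ℝ (Fin d)),
      2 * (F m v - F m u) ≥ 2 * ⟪v - u, Gm m u⟫_ℝ + μ * ‖v - u‖ ^ 2)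
    (θstar : EuclideanSpace ℝ (Fin d))
    (hmin : ∀ v, ∑ m, w m * F m θstar ≤ ∑ m, w m * F m v)
    (Fmin : Fin M → ℝ) (hFmin : ∀ m v, Fmin m ≤ F m v)
    (Fstar Γ : ℝ) (hFstar : Fstar = ∑ m, w m * F m θstar)
    (hΓ : Γ = Fstar - ∑ m, w m * Fmin m)
    (θ θh : ℕ → Ω → EuclideanSpace ℝ (Fin d))
    (g : ℕ → Fin M → ℕ → Ω → EuclideanSpace ℝ (Fin d))
    (θloc : ℕ → Fin M → ℕ → Ω → EuclideanSpace ℝ (Fin d))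
    -- (i) deterministic initialization with θ̂(0) = θ(0)
    (θ0 : EuclideanSpace ℝ (Fin d)) (hθ0 : ∀ ω, θ 0 ω = θ0)
    (hθh0 : ∀ ω, θh 0 ω = θ 0 ω)
    -- (ii) local iterates and global update
    (hθloc : ∀ t m i ω, θloc t m i ω = θh t ω - η t • ∑ j ∈ Icc 1 (i - 1), g t m j ω)
    (hupdate : ∀ t, ∀ᵐ ω ∂P,
      θ (t + 1) ω = θh t ω - η t • ∑ m, w m • ∑ i ∈ Icc 1 τ, g t m i ω)
    -- integrability of all integrands appearing below
    (hθint : ∀ t, Integrable (θ t) P) (hθhint : ∀ t, Integrable (θh t) P)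
    (hθ2int : ∀ t, Integrable (fun ω => ‖θ t ω‖ ^ 2) P)
    (hθh2int : ∀ t, Integrable (fun ω => ‖θh t ω‖ ^ 2) P)
    (hθstar2int : ∀ t, Integrable (fun ω => ‖θ t ω - θstar‖ ^ 2) P)
    (hθhstar2int : ∀ t, Integrable (fun ω => ‖θh t ω - θstar‖ ^ 2) P)
    (hdiff2int : ∀ t, 1 ≤ t → Integrable (fun ω => ‖θ t ω - θh (t - 1) ω‖ ^ 2) P)
    (hgint : ∀ t m, ∀ i ∈ Icc 1 τ, Integrable (fun ω => g t m i ω) P)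
    (hg2int : ∀ t m, ∀ i ∈ Icc 1 τ, Integrable (fun ω => ‖g t m i ω‖ ^ 2) P)
    (hip0int : ∀ t m, ∀ i ∈ Icc 1 τ,
      Integrable (fun ω => ⟪θstar - θh t ω, g t m i ω⟫_ℝ) P)
    (hip1int : ∀ t m, ∀ i ∈ Icc 1 τ,
      Integrable (fun ω => ⟪θstar - θloc t m i ω, g t m i ω⟫_ℝ) P)
    (hip2int : ∀ t m, ∀ i ∈ Icc 1 τ,
      Integrable (fun ω => ⟪θstar - θloc t m i ω, Gm m (θloc t m i ω)⟫_ℝ) P)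
    (hloc2int : ∀ t m, ∀ i ∈ Icc 1 τ,
      Integrable (fun ω => ‖θloc t m i ω - θstar‖ ^ 2) P)
    -- (iii) bounded second moments of the stochastic gradients
    (hgbound : ∀ t m, ∀ i ∈ Icc 1 τ, ∫ ω, ‖g t m i ω‖ ^ 2 ∂P ≤ G ^ 2)
    -- (iv) unbiasedness identities
    (hunbiased : ∀ t m, ∀ i ∈ Icc 1 τ,
      ∫ ω, ⟪θstar - θloc t m i ω, g t m i ω⟫_ℝ ∂P
        = ∫ ω, ⟪θstar - θloc t m i ω, Gm m (θloc t m i ω)⟫_ℝ ∂P)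
    -- (v) quantized broadcasting: unbiasedness and second-moment bound
    (hqmean : ∀ t, 1 ≤ t → ∫ ω, θh t ω ∂P = ∫ ω, θ t ω ∂P)
    (hqsec : ∀ t, 1 ≤ t → ∫ ω, ‖θh t ω‖ ^ 2 ∂P
      ≤ ∫ ω, ‖θ t ω‖ ^ 2 ∂P
        + ε * d / (4 * q₁ ^ 2) * ∫ ω, ‖θ t ω - θh (t - 1) ω‖ ^ 2 ∂P)
    -- the coefficients A and B of the convergence bound
    (A B : ℕ → ℝ)
    (hA : ∀ i, A i = 1 - μ * η i * ((τ : ℝ) - η i * ((τ : ℝ) - 1)))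
    (hB0 : B 0 = η 0 ^ 2 * ((τ : ℝ) ^ 2 + (τ : ℝ) - 1) * G ^ 2
        + (1 + μ * (1 - η 0)) * η 0 ^ 2 * G ^ 2
            * ((τ : ℝ) * ((τ : ℝ) - 1) * (2 * (τ : ℝ) - 1) / 6)
        + 2 * η 0 * ((τ : ℝ) - 1) * Γ)
    (hB : ∀ j, 1 ≤ j → B j
        = A j * (η (j - 1) * τ * G / (2 * q₁)) ^ 2 * (ε * d)
        + η j ^ 2 * ((τ : ℝ) ^ 2 + (τ : ℝ) - 1) * G ^ 2
        + (1 + μ * (1 - η j)) * η j ^ 2 * G ^ 2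
            * ((τ : ℝ) * ((τ : ℝ) - 1) * (2 * (τ : ℝ) - 1) / 6)
        + 2 * η j * ((τ : ℝ) - 1) * Γ) :
    ∀ t, 1 ≤ t →
      ∫ ω, ‖θ t ω - θstar‖ ^ 2 ∂P
        ≤ (∏ i ∈ Finset.range t, A i) * ‖θ0 - θstar‖ ^ 2
          + ∑ j ∈ Finset.range t, B j * ∏ i ∈ Finset.Ico (j + 1) t, A i := by
  -- basic numeric facts
  have hτR : (1:ℝ) ≤ (τ:ℝ) := by exact_mod_cast hτ
  have hone : (1:ℕ) ∈ Icc 1 τ := mem_Icc.2 ⟨le_refl 1, hτ⟩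
  -- A is nonnegative
  have hA0 : ∀ i, 0 ≤ A i := by
    intro i
    have hμτ : (0:ℝ) < μ * (τ:ℝ) := mul_pos hμ (by linarith)
    have h1 : η i * (μ * (τ:ℝ)) ≤ 1 := by
      calc η i * (μ * (τ:ℝ)) ≤ (1 / (μ * (τ:ℝ))) * (μ * (τ:ℝ)) :=
            mul_le_mul_of_nonneg_right (hη2 i) hμτ.le
        _ = 1 := by field_simp
    have h2 : (0:ℝ) ≤ μ * η i ^ 2 * ((τ:ℝ) - 1) :=
      mul_nonneg (mul_nonneg hμ.le (sq_nonneg _)) (by linarith)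
    rw [hA]
    nlinarith [h1, h2]
  -- integrability and bound for the weighted gradient-norm sums
  have hGint : ∀ s, Integrable (fun ω => ∑ m, w m * ∑ i ∈ Icc 1 τ, ‖g s m i ω‖ ^ 2) P :=
    fun s => integrable_finset_sum _ fun m _ =>
      (integrable_finset_sum _ fun i hi => hg2int s m i hi).const_mul _
  have hGbd : ∀ s, ∫ ω, ∑ m, w m * ∑ i ∈ Icc 1 τ, ‖g s m i ω‖ ^ 2 ∂P ≤ (τ:ℝ) * G ^ 2 := by
    intro s
    rw [integral_finset_sum _ fun m _ =>
      (integrable_finset_sum _ fun i hi => hg2int s m i hi).const_mul _]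
    calc ∑ m, ∫ ω, w m * ∑ i ∈ Icc 1 τ, ‖g s m i ω‖ ^ 2 ∂P
        = ∑ m, w m * ∑ i ∈ Icc 1 τ, ∫ ω, ‖g s m i ω‖ ^ 2 ∂P := by
          refine Finset.sum_congr rfl fun m _ => ?_
          rw [integral_const_mul, integral_finset_sum _ fun i hi => hg2int s m i hi]
      _ ≤ ∑ m, w m * ((τ:ℝ) * G ^ 2) := by
          refine Finset.sum_le_sum fun m _ => mul_le_mul_of_nonneg_left ?_ (hw m)
          calc ∑ i ∈ Icc 1 τ, ∫ ω, ‖g s m i ω‖ ^ 2 ∂P ≤ ∑ _i ∈ Icc 1 τ, G ^ 2 :=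
                Finset.sum_le_sum fun i hi => hgbound s m i hi
            _ = (τ:ℝ) * G ^ 2 := by
                rw [Finset.sum_const, Nat.card_Icc, Nat.add_sub_cancel, nsmul_eq_mul]
      _ = (τ:ℝ) * G ^ 2 := by rw [← Finset.sum_mul, hw1, one_mul]
  -- pointwise bound on the aggregated gradient
  have hNb : ∀ s ω, ‖∑ m, w m • ∑ i ∈ Icc 1 τ, g s m i ω‖ ^ 2
      ≤ (τ:ℝ) * ∑ m, w m * ∑ i ∈ Icc 1 τ, ‖g s m i ω‖ ^ 2 := by
    intro s ω
    calc ‖∑ m, w m • ∑ i ∈ Icc 1 τ, g s m i ω‖ ^ 2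
        ≤ ∑ m, w m * ‖∑ i ∈ Icc 1 τ, g s m i ω‖ ^ 2 :=
          lfl_sq_norm_wsum_le univ w hw hw1 _
      _ ≤ ∑ m, w m * ((τ:ℝ) * ∑ i ∈ Icc 1 τ, ‖g s m i ω‖ ^ 2) := by
          refine Finset.sum_le_sum fun m _ => mul_le_mul_of_nonneg_left ?_ (hw m)
          have h := lfl_sq_norm_sum_le (Icc 1 τ) (fun i => g s m i ω)
          rwa [Nat.card_Icc, Nat.add_sub_cancel] at h
      _ = (τ:ℝ) * ∑ m, w m * ∑ i ∈ Icc 1 τ, ‖g s m i ω‖ ^ 2 := by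
          rw [Finset.mul_sum]; exact Finset.sum_congr rfl fun m _ => by ring
  -- second moment of one global update step
  have hDb : ∀ s, ∫ ω, ‖θ (s+1) ω - θh s ω‖ ^ 2 ∂P ≤ η s ^ 2 * (τ:ℝ) ^ 2 * G ^ 2 := by
    intro s
    have hptw : ∀ᵐ ω ∂P, ‖θ (s+1) ω - θh s ω‖ ^ 2
        ≤ η s ^ 2 * ((τ:ℝ) * ∑ m, w m * ∑ i ∈ Icc 1 τ, ‖g s m i ω‖ ^ 2) := by
      filter_upwards [hupdate s] with ω hω
      have h1 : θ (s+1) ω - θh s ω = -(η s • ∑ m, w m • ∑ i ∈ Icc 1 τ, g s m i ω) := by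
        rw [hω]; abel
      rw [h1, norm_neg, norm_smul, mul_pow, Real.norm_eq_abs, sq_abs]
      exact mul_le_mul_of_nonneg_left (hNb s ω) (sq_nonneg _)
    have hint : Integrable (fun ω => ‖θ (s+1) ω - θh s ω‖ ^ 2) P := by
      have h := hdiff2int (s+1) (Nat.le_add_left 1 s)
      simpa using h
    calc ∫ ω, ‖θ (s+1) ω - θh s ω‖ ^ 2 ∂P
        ≤ ∫ ω, η s ^ 2 * ((τ:ℝ) * ∑ m, w m * ∑ i ∈ Icc 1 τ, ‖g s m i ω‖ ^ 2) ∂P :=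
          integral_mono_ae hint (((hGint s).const_mul _).const_mul _) hptw
      _ = η s ^ 2 * ((τ:ℝ) * ∫ ω, ∑ m, w m * ∑ i ∈ Icc 1 τ, ‖g s m i ω‖ ^ 2 ∂P) := by
          rw [integral_const_mul, integral_const_mul]
      _ ≤ η s ^ 2 * ((τ:ℝ) * ((τ:ℝ) * G ^ 2)) := by
          refine mul_le_mul_of_nonneg_left
            (mul_le_mul_of_nonneg_left (hGbd s) (by linarith)) (sq_nonneg _)
      _ = η s ^ 2 * (τ:ℝ) ^ 2 * G ^ 2 := by ring
  -- expansion of the second moment of a recentred random vector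
  have hexpand : ∀ (f : Ω → EuclideanSpace ℝ (Fin d)), Integrable f P →
      Integrable (fun ω => ‖f ω‖ ^ 2) P →
      ∫ ω, ‖f ω - θstar‖ ^ 2 ∂P
        = ∫ ω, ‖f ω‖ ^ 2 ∂P - 2 * ⟪θstar, ∫ ω, f ω ∂P⟫_ℝ + ‖θstar‖ ^ 2 := by
    intro f hf hf2
    have i1 : Integrable (fun ω => 2 * ⟪θstar, f ω⟫_ℝ) P := (hf.const_inner θstar).const_mul 2
    have i2 : Integrable (fun ω => ‖f ω‖ ^ 2 - 2 * ⟪θstar, f ω⟫_ℝ) P := hf2.sub i1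
    have e0 : ∫ ω, ‖f ω - θstar‖ ^ 2 ∂P
        = ∫ ω, (‖f ω‖ ^ 2 - 2 * ⟪θstar, f ω⟫_ℝ + ‖θstar‖ ^ 2) ∂P := by
      refine integral_congr_ae (Filter.Eventually.of_forall fun ω => ?_)
      show ‖f ω - θstar‖ ^ 2 = ‖f ω‖ ^ 2 - 2 * ⟪θstar, f ω⟫_ℝ + ‖θstar‖ ^ 2
      rw [norm_sub_sq_real, real_inner_comm]
    have e1 : ∫ ω, (‖f ω‖ ^ 2 - 2 * ⟪θstar, f ω⟫_ℝ + ‖θstar‖ ^ 2) ∂P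
        = (∫ ω, (‖f ω‖ ^ 2 - 2 * ⟪θstar, f ω⟫_ℝ) ∂P) + ∫ (_ : Ω), ‖θstar‖ ^ 2 ∂P :=
      integral_add i2 (integrable_const _)
    have e2 : ∫ ω, (‖f ω‖ ^ 2 - 2 * ⟪θstar, f ω⟫_ℝ) ∂P
        = (∫ ω, ‖f ω‖ ^ 2 ∂P) - ∫ ω, 2 * ⟪θstar, f ω⟫_ℝ ∂P := integral_sub hf2 i1
    have e3 : ∫ ω, 2 * ⟪θstar, f ω⟫_ℝ ∂P = 2 * ∫ ω, ⟪θstar, f ω⟫_ℝ ∂P :=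
      integral_const_mul _ _
    have e4 : ∫ ω, ⟪θstar, f ω⟫_ℝ ∂P = ⟪θstar, ∫ ω, f ω ∂P⟫_ℝ := integral_inner hf θstar
    have e5 : ∫ (_ : Ω), ‖θstar‖ ^ 2 ∂P = ‖θstar‖ ^ 2 := by simp
    rw [e0, e1, e2, e3, e4, e5]
  -- quantization step
  have hquant : ∀ s, 1 ≤ s → ∫ ω, ‖θh s ω - θstar‖ ^ 2 ∂P
      ≤ ∫ ω, ‖θ s ω - θstar‖ ^ 2 ∂P
        + ε * d / (4 * q₁ ^ 2) * (η (s-1) ^ 2 * (τ:ℝ) ^ 2 * G ^ 2) := by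
    intro s hs
    have h1 := hexpand (θh s) (hθhint s) (hθh2int s)
    have h2 := hexpand (θ s) (hθint s) (hθ2int s)
    have h3 := hqsec s hs
    have hc : (0:ℝ) ≤ ε * d / (4 * q₁ ^ 2) := by positivity
    have h4 : ∫ ω, ‖θ s ω - θh (s-1) ω‖ ^ 2 ∂P ≤ η (s-1) ^ 2 * (τ:ℝ) ^ 2 * G ^ 2 := by
      obtain ⟨s', rfl⟩ : ∃ s', s = s' + 1 := ⟨s - 1, by omega⟩
      simpa using hDb s'
    have h5 := mul_le_mul_of_nonneg_left h4 hc
    rw [h1, h2, hqmean s hs]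
    linarith [h3, h5]
  -- deterministic initial value
  have hY0 : ∫ ω, ‖θh 0 ω - θstar‖ ^ 2 ∂P = ‖θ0 - θstar‖ ^ 2 := by
    have h : (fun ω => ‖θh 0 ω - θstar‖ ^ 2) = fun _ => ‖θ0 - θstar‖ ^ 2 := by
      funext ω; rw [hθh0, hθ0]
    rw [h, integral_const]
    simp [measure_univ]
  -- THE KEY ONE-STEP BOUND
  have key : ∀ s, ∫ ω, ‖θ (s+1) ω - θstar‖ ^ 2 ∂P
      ≤ A s * ∫ ω, ‖θh s ω - θstar‖ ^ 2 ∂P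
        + (η s ^ 2 * ((τ:ℝ) ^ 2 + (τ:ℝ) - 1) * G ^ 2
          + (1 + μ * (1 - η s)) * η s ^ 2 * G ^ 2
              * ((τ:ℝ) * ((τ:ℝ) - 1) * (2 * (τ:ℝ) - 1) / 6)
          + 2 * η s * ((τ:ℝ) - 1) * Γ) := by
    intro s
    have he0 : (0:ℝ) ≤ η s := (hη0 s).le
    have he1 := hη1 s
    have hloc1 : ∀ (m : Fin M) ω, θloc s m 1 ω = θh s ω := by
      intro m ω; rw [hθloc]; simp
    have hicast : ∀ i : ℕ, 1 ≤ i → ((Icc 1 (i-1)).card : ℝ) = (i:ℝ) - 1 := by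
      intro i hi
      rw [Nat.card_Icc, Nat.add_sub_cancel, Nat.cast_sub hi, Nat.cast_one]
    -- pointwise drift bound
    have hdrift : ∀ (m : Fin M) i ω, 1 ≤ i →
        ‖θloc s m i ω - θh s ω‖ ^ 2
          ≤ η s ^ 2 * ((i:ℝ) - 1) * ∑ j ∈ Icc 1 (i-1), ‖g s m j ω‖ ^ 2 := by
      intro m i ω hi
      rw [hθloc]
      have h1 : θh s ω - η s • (∑ j ∈ Icc 1 (i-1), g s m j ω) - θh s ω
          = -(η s • ∑ j ∈ Icc 1 (i-1), g s m j ω) := by abel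
      rw [h1, norm_neg, norm_smul, mul_pow, Real.norm_eq_abs, sq_abs]
      calc η s ^ 2 * ‖∑ j ∈ Icc 1 (i-1), g s m j ω‖ ^ 2
          ≤ η s ^ 2 * (((Icc 1 (i-1)).card : ℝ) * ∑ j ∈ Icc 1 (i-1), ‖g s m j ω‖ ^ 2) :=
            mul_le_mul_of_nonneg_left (lfl_sq_norm_sum_le _ _) (sq_nonneg _)
        _ = η s ^ 2 * ((i:ℝ) - 1) * ∑ j ∈ Icc 1 (i-1), ‖g s m j ω‖ ^ 2 := by
            rw [hicast i hi]; ring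
    have hdriftint : ∀ (m : Fin M) i, i ∈ Icc 1 τ →
        Integrable (fun ω => ∑ j ∈ Icc 1 (i-1), ‖g s m j ω‖ ^ 2) P := by
      intro m i hi
      refine integrable_finset_sum _ fun j hj => hg2int s m j ?_
      simp only [mem_Icc] at hi hj ⊢; omega
    have hdriftbd : ∀ (m : Fin M) i, i ∈ Icc 1 τ →
        ∫ ω, ∑ j ∈ Icc 1 (i-1), ‖g s m j ω‖ ^ 2 ∂P ≤ ((i:ℝ) - 1) * G ^ 2 := by
      intro m i hi
      have hi1 : 1 ≤ i := (mem_Icc.1 hi).1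
      rw [integral_finset_sum _ fun j hj => hg2int s m j
        (by simp only [mem_Icc] at hi hj ⊢; omega)]
      calc ∑ j ∈ Icc 1 (i-1), ∫ ω, ‖g s m j ω‖ ^ 2 ∂P
          ≤ ∑ _j ∈ Icc 1 (i-1), G ^ 2 := Finset.sum_le_sum fun j hj =>
            hgbound s m j (by simp only [mem_Icc] at hi hj ⊢; omega)
        _ = ((i:ℝ) - 1) * G ^ 2 := by
            rw [Finset.sum_const, nsmul_eq_mul, hicast i hi1]
    -- the i = 1 term, weighted over devices
    have hT1 : ∑ m, w m * ∫ ω, ⟪θstar - θh s ω, g s m 1 ω⟫_ℝ ∂P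
        ≤ -(μ/2) * ∫ ω, ‖θh s ω - θstar‖ ^ 2 ∂P := by
      have heq : ∀ m : Fin M, ∫ ω, ⟪θstar - θh s ω, g s m 1 ω⟫_ℝ ∂P
          = ∫ ω, ⟪θstar - θloc s m 1 ω, Gm m (θloc s m 1 ω)⟫_ℝ ∂P := by
        intro m
        rw [← hunbiased s m 1 hone]
        refine integral_congr_ae (Filter.Eventually.of_forall fun ω => ?_)
        show ⟪θstar - θh s ω, g s m 1 ω⟫_ℝ = ⟪θstar - θloc s m 1 ω, g s m 1 ω⟫_ℝ
        rw [hloc1]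
      have hint1 : ∀ m : Fin M, Integrable
          (fun ω => w m * ⟪θstar - θloc s m 1 ω, Gm m (θloc s m 1 ω)⟫_ℝ) P :=
        fun m => (hip2int s m 1 hone).const_mul _
      have hpt1 : ∀ ω, ∑ m, w m * ⟪θstar - θloc s m 1 ω, Gm m (θloc s m 1 ω)⟫_ℝ
          ≤ -(μ/2) * ‖θh s ω - θstar‖ ^ 2 := by
        intro ω
        have hb : ∀ m : Fin M, w m * ⟪θstar - θloc s m 1 ω, Gm m (θloc s m 1 ω)⟫_ℝ
            ≤ w m * (F m θstar - F m (θh s ω)) - w m * (μ/2 * ‖θstar - θh s ω‖ ^ 2) := by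
          intro m
          rw [hloc1]
          have h := hsc m θstar (θh s ω)
          have h2 : ⟪θstar - θh s ω, Gm m (θh s ω)⟫_ℝ
              ≤ (F m θstar - F m (θh s ω)) - μ/2 * ‖θstar - θh s ω‖ ^ 2 := by linarith
          calc w m * ⟪θstar - θh s ω, Gm m (θh s ω)⟫_ℝ
              ≤ w m * ((F m θstar - F m (θh s ω)) - μ/2 * ‖θstar - θh s ω‖ ^ 2) :=
                mul_le_mul_of_nonneg_left h2 (hw m)
            _ = _ := by ring
        calc ∑ m, w m * ⟪θstar - θloc s m 1 ω, Gm m (θloc s m 1 ω)⟫_ℝ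
            ≤ ∑ m, (w m * (F m θstar - F m (θh s ω))
                - w m * (μ/2 * ‖θstar - θh s ω‖ ^ 2)) :=
              Finset.sum_le_sum fun m _ => hb m
          _ = (∑ m, w m * (F m θstar - F m (θh s ω)))
              - (∑ m, w m) * (μ/2 * ‖θstar - θh s ω‖ ^ 2) := by
              rw [Finset.sum_sub_distrib, Finset.sum_mul]
          _ ≤ -(μ/2) * ‖θh s ω - θstar‖ ^ 2 := by
              have hmm := hmin (θh s ω)
              have hsum : ∑ m, w m * (F m θstar - F m (θh s ω))
                  = (∑ m, w m * F m θstar) - ∑ m, w m * F m (θh s ω) := by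
                rw [← Finset.sum_sub_distrib]
                exact Finset.sum_congr rfl fun m _ => by ring
              rw [hw1, hsum, norm_sub_rev θstar (θh s ω)]
              linarith
      calc ∑ m, w m * ∫ ω, ⟪θstar - θh s ω, g s m 1 ω⟫_ℝ ∂P
          = ∫ ω, ∑ m, w m * ⟪θstar - θloc s m 1 ω, Gm m (θloc s m 1 ω)⟫_ℝ ∂P := by
            rw [integral_finset_sum _ fun m _ => hint1 m]
            exact Finset.sum_congr rfl fun m _ => by rw [integral_const_mul, heq m]
        _ ≤ ∫ ω, -(μ/2) * ‖θh s ω - θstar‖ ^ 2 ∂P :=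
            integral_mono (integrable_finset_sum _ fun m _ => hint1 m)
              ((hθhstar2int s).const_mul _) hpt1
        _ = -(μ/2) * ∫ ω, ‖θh s ω - θstar‖ ^ 2 ∂P := integral_const_mul _ _
    -- the tail terms i ≥ 2
    have hT2 : ∀ (m : Fin M), ∀ i ∈ Icc 2 τ,
        2 * η s * ∫ ω, ⟪θstar - θh s ω, g s m i ω⟫_ℝ ∂P
          ≤ 2 * η s * (F m θstar - Fmin m)
            - μ * η s * (1 - η s) * ∫ ω, ‖θh s ω - θstar‖ ^ 2 ∂P
            + (1 + μ * (1 - η s)) * η s ^ 2 * ((i:ℝ) - 1) ^ 2 * G ^ 2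
            + η s ^ 2 * G ^ 2 := by
      intro m i hi2
      have hi1 : i ∈ Icc 1 τ := by simp only [mem_Icc] at hi2 ⊢; omega
      have hige1 : 1 ≤ i := (mem_Icc.1 hi1).1
      have hiR : (0:ℝ) ≤ (i:ℝ) - 1 := by
        have : (1:ℝ) ≤ (i:ℝ) := by exact_mod_cast hige1
        linarith
      -- cross term
      have hf2 : Integrable (fun ω => ⟪θloc s m i ω - θh s ω, g s m i ω⟫_ℝ) P := by
        refine ((hip0int s m i hi1).sub (hip1int s m i hi1)).congr
          (Filter.Eventually.of_forall fun ω => ?_)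
        show ⟪θstar - θh s ω, g s m i ω⟫_ℝ - ⟪θstar - θloc s m i ω, g s m i ω⟫_ℝ
          = ⟪θloc s m i ω - θh s ω, g s m i ω⟫_ℝ
        rw [← inner_sub_left]
        congr 1
        abel
      have hcross : 2 * η s * ∫ ω, ⟪θloc s m i ω - θh s ω, g s m i ω⟫_ℝ ∂P
          ≤ η s ^ 2 * ((i:ℝ) - 1) ^ 2 * G ^ 2 + η s ^ 2 * G ^ 2 := by
        have hpt : ∀ ω, 2 * η s * ⟪θloc s m i ω - θh s ω, g s m i ω⟫_ℝ
            ≤ η s ^ 2 * ((i:ℝ) - 1) * ∑ j ∈ Icc 1 (i-1), ‖g s m j ω‖ ^ 2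
              + η s ^ 2 * ‖g s m i ω‖ ^ 2 := by
          intro ω
          have h1 : 2 * η s * ⟪θloc s m i ω - θh s ω, g s m i ω⟫_ℝ
              = 2 * ⟪θloc s m i ω - θh s ω, η s • g s m i ω⟫_ℝ := by
            rw [real_inner_smul_right]; ring
          have h2 := lfl_two_inner_le (θloc s m i ω - θh s ω) (η s • g s m i ω)
          have h3 := hdrift m i ω hige1
          have h4 : ‖η s • g s m i ω‖ ^ 2 = η s ^ 2 * ‖g s m i ω‖ ^ 2 := by
            rw [norm_smul, mul_pow, Real.norm_eq_abs, sq_abs]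
          rw [h1]
          linarith
        have iA : Integrable (fun ω => η s ^ 2 * ((i:ℝ) - 1)
            * ∑ j ∈ Icc 1 (i-1), ‖g s m j ω‖ ^ 2) P := (hdriftint m i hi1).const_mul _
        have iB : Integrable (fun ω => η s ^ 2 * ‖g s m i ω‖ ^ 2) P :=
          (hg2int s m i hi1).const_mul _
        have hmono : ∫ ω, 2 * η s * ⟪θloc s m i ω - θh s ω, g s m i ω⟫_ℝ ∂P
            ≤ ∫ ω, (η s ^ 2 * ((i:ℝ) - 1) * ∑ j ∈ Icc 1 (i-1), ‖g s m j ω‖ ^ 2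
                + η s ^ 2 * ‖g s m i ω‖ ^ 2) ∂P :=
          integral_mono (hf2.const_mul _) (iA.add iB) hpt
        have eL : ∫ ω, 2 * η s * ⟪θloc s m i ω - θh s ω, g s m i ω⟫_ℝ ∂P
            = 2 * η s * ∫ ω, ⟪θloc s m i ω - θh s ω, g s m i ω⟫_ℝ ∂P :=
          integral_const_mul _ _
        have eR : ∫ ω, (η s ^ 2 * ((i:ℝ) - 1) * ∑ j ∈ Icc 1 (i-1), ‖g s m j ω‖ ^ 2
              + η s ^ 2 * ‖g s m i ω‖ ^ 2) ∂P
            = η s ^ 2 * ((i:ℝ) - 1) * (∫ ω, ∑ j ∈ Icc 1 (i-1), ‖g s m j ω‖ ^ 2 ∂P)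
              + η s ^ 2 * ∫ ω, ‖g s m i ω‖ ^ 2 ∂P := by
          rw [integral_add iA iB, integral_const_mul, integral_const_mul]
        rw [eL, eR] at hmono
        have h5 : (0:ℝ) ≤ η s ^ 2 * ((i:ℝ) - 1) := mul_nonneg (sq_nonneg _) hiR
        have h6 := mul_le_mul_of_nonneg_left (hdriftbd m i hi1) h5
        have h7 := mul_le_mul_of_nonneg_left (hgbound s m i hi1) (sq_nonneg (η s))
        nlinarith [hmono, h6, h7]
      -- strong convexity term
      have hsc2 : ∫ ω, ⟪θstar - θloc s m i ω, Gm m (θloc s m i ω)⟫_ℝ ∂P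
          ≤ (F m θstar - Fmin m) - μ/2 * ∫ ω, ‖θloc s m i ω - θstar‖ ^ 2 ∂P := by
        have hpt : ∀ ω, ⟪θstar - θloc s m i ω, Gm m (θloc s m i ω)⟫_ℝ
            + μ/2 * ‖θloc s m i ω - θstar‖ ^ 2 ≤ F m θstar - Fmin m := by
          intro ω
          have h := hsc m θstar (θloc s m i ω)
          have h2 := hFmin m (θloc s m i ω)
          rw [norm_sub_rev (θloc s m i ω) θstar]
          linarith
        have iA : Integrable (fun ω => μ/2 * ‖θloc s m i ω - θstar‖ ^ 2) P :=
          (hloc2int s m i hi1).const_mul (μ/2)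
        have h3 : ∫ ω, (⟪θstar - θloc s m i ω, Gm m (θloc s m i ω)⟫_ℝ
              + μ/2 * ‖θloc s m i ω - θstar‖ ^ 2) ∂P
            ≤ ∫ (_ : Ω), (F m θstar - Fmin m) ∂P :=
          integral_mono ((hip2int s m i hi1).add iA) (integrable_const _) hpt
        have e1 : ∫ ω, (⟪θstar - θloc s m i ω, Gm m (θloc s m i ω)⟫_ℝ
              + μ/2 * ‖θloc s m i ω - θstar‖ ^ 2) ∂P
            = (∫ ω, ⟪θstar - θloc s m i ω, Gm m (θloc s m i ω)⟫_ℝ ∂P)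
              + μ/2 * ∫ ω, ‖θloc s m i ω - θstar‖ ^ 2 ∂P := by
          rw [integral_add (hip2int s m i hi1) iA, integral_const_mul]
        have e2 : ∫ (_ : Ω), (F m θstar - Fmin m) ∂P = F m θstar - Fmin m := by simp
        rw [e1, e2] at h3
        linarith
      -- interpolation between local iterate and broadcast model
      have hinterp : μ * η s * (1 - η s) * ∫ ω, ‖θh s ω - θstar‖ ^ 2 ∂P
          ≤ μ * η s * ∫ ω, ‖θloc s m i ω - θstar‖ ^ 2 ∂P
            + μ * (1 - η s) * (η s ^ 2 * ((i:ℝ) - 1) ^ 2 * G ^ 2) := by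
        have hpt : ∀ ω, μ * η s * (1 - η s) * ‖θh s ω - θstar‖ ^ 2
            ≤ μ * η s * ‖θloc s m i ω - θstar‖ ^ 2
              + μ * (1 - η s) * (η s ^ 2 * ((i:ℝ) - 1)
                  * ∑ j ∈ Icc 1 (i-1), ‖g s m j ω‖ ^ 2) := by
          intro ω
          have h1 := lfl_interp μ (η s) hμ.le he0 he1 (θloc s m i ω - θstar) (θh s ω - θstar)
          have h2 : θloc s m i ω - θstar - (θh s ω - θstar) = θloc s m i ω - θh s ω := by abel
          rw [h2] at h1
          have h3 := hdrift m i ω hige1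
          have h4 : (0:ℝ) ≤ μ * (1 - η s) := mul_nonneg hμ.le (by linarith)
          nlinarith [mul_le_mul_of_nonneg_left h3 h4]
        have iA : Integrable (fun ω => μ * η s * ‖θloc s m i ω - θstar‖ ^ 2) P :=
          (hloc2int s m i hi1).const_mul _
        have iB : Integrable (fun ω => μ * (1 - η s) * (η s ^ 2 * ((i:ℝ) - 1)
            * ∑ j ∈ Icc 1 (i-1), ‖g s m j ω‖ ^ 2)) P :=
          ((hdriftint m i hi1).const_mul _).const_mul _
        have hmono : ∫ ω, μ * η s * (1 - η s) * ‖θh s ω - θstar‖ ^ 2 ∂P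
            ≤ ∫ ω, (μ * η s * ‖θloc s m i ω - θstar‖ ^ 2
                + μ * (1 - η s) * (η s ^ 2 * ((i:ℝ) - 1)
                    * ∑ j ∈ Icc 1 (i-1), ‖g s m j ω‖ ^ 2)) ∂P :=
          integral_mono ((hθhstar2int s).const_mul _) (iA.add iB) hpt
        have eL : ∫ ω, μ * η s * (1 - η s) * ‖θh s ω - θstar‖ ^ 2 ∂P
            = μ * η s * (1 - η s) * ∫ ω, ‖θh s ω - θstar‖ ^ 2 ∂P := integral_const_mul _ _
        have eR : ∫ ω, (μ * η s * ‖θloc s m i ω - θstar‖ ^ 2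
              + μ * (1 - η s) * (η s ^ 2 * ((i:ℝ) - 1)
                  * ∑ j ∈ Icc 1 (i-1), ‖g s m j ω‖ ^ 2)) ∂P
            = μ * η s * (∫ ω, ‖θloc s m i ω - θstar‖ ^ 2 ∂P)
              + μ * (1 - η s) * (η s ^ 2 * ((i:ℝ) - 1)
                  * ∫ ω, ∑ j ∈ Icc 1 (i-1), ‖g s m j ω‖ ^ 2 ∂P) := by
          rw [integral_add iA iB, integral_const_mul, integral_const_mul, integral_const_mul]
        rw [eL, eR] at hmono
        have h5 : (0:ℝ) ≤ μ * (1 - η s) * (η s ^ 2 * ((i:ℝ) - 1)) :=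
          mul_nonneg (mul_nonneg hμ.le (by linarith)) (mul_nonneg (sq_nonneg _) hiR)
        have h6 := mul_le_mul_of_nonneg_left (hdriftbd m i hi1) h5
        nlinarith [hmono, h6]
      -- split the integral
      have hIsplit : ∫ ω, ⟪θstar - θh s ω, g s m i ω⟫_ℝ ∂P
          = (∫ ω, ⟪θstar - θloc s m i ω, g s m i ω⟫_ℝ ∂P)
            + ∫ ω, ⟪θloc s m i ω - θh s ω, g s m i ω⟫_ℝ ∂P := by
        rw [← integral_add (hip1int s m i hi1) hf2]
        refine integral_congr_ae (Filter.Eventually.of_forall fun ω => ?_)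
        show ⟪θstar - θh s ω, g s m i ω⟫_ℝ
          = ⟪θstar - θloc s m i ω, g s m i ω⟫_ℝ + ⟪θloc s m i ω - θh s ω, g s m i ω⟫_ℝ
        rw [← inner_add_left, sub_add_sub_cancel]
      rw [hIsplit, hunbiased s m i hi1]
      have h8 := mul_le_mul_of_nonneg_left hsc2 (by linarith : (0:ℝ) ≤ 2 * η s)
      nlinarith [h8, hcross, hinterp]
    -- expansion of the update
    have hptw : ∀ᵐ ω ∂P, ‖θ (s+1) ω - θstar‖ ^ 2
        ≤ ‖θh s ω - θstar‖ ^ 2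
          + 2 * η s * ∑ m, w m * ∑ i ∈ Icc 1 τ, ⟪θstar - θh s ω, g s m i ω⟫_ℝ
          + η s ^ 2 * ((τ:ℝ) * ∑ m, w m * ∑ i ∈ Icc 1 τ, ‖g s m i ω‖ ^ 2) := by
      filter_upwards [hupdate s] with ω hω
      have h1 : θ (s+1) ω - θstar
          = (θh s ω - θstar) - η s • (∑ m, w m • ∑ i ∈ Icc 1 τ, g s m i ω) := by
        rw [hω]; abel
      rw [h1, norm_sub_sq_real]
      have h2 : ⟪θh s ω - θstar, η s • ∑ m, w m • ∑ i ∈ Icc 1 τ, g s m i ω⟫_ℝ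
          = -(η s * ∑ m, w m * ∑ i ∈ Icc 1 τ, ⟪θstar - θh s ω, g s m i ω⟫_ℝ) := by
        rw [show θh s ω - θstar = -(θstar - θh s ω) from (neg_sub _ _).symm]
        simp only [inner_neg_left, real_inner_smul_right, inner_sum]
      have h3 : ‖η s • ∑ m, w m • ∑ i ∈ Icc 1 τ, g s m i ω‖ ^ 2
          ≤ η s ^ 2 * ((τ:ℝ) * ∑ m, w m * ∑ i ∈ Icc 1 τ, ‖g s m i ω‖ ^ 2) := by
        rw [norm_smul, mul_pow, Real.norm_eq_abs, sq_abs]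
        exact mul_le_mul_of_nonneg_left (hNb s ω) (sq_nonneg _)
      rw [h2]
      linarith
    have hmidint : Integrable
        (fun ω => ∑ m, w m * ∑ i ∈ Icc 1 τ, ⟪θstar - θh s ω, g s m i ω⟫_ℝ) P :=
      integrable_finset_sum _ fun m _ =>
        (integrable_finset_sum _ fun i hi => hip0int s m i hi).const_mul _
    have hexp1 : ∫ ω, ‖θ (s+1) ω - θstar‖ ^ 2 ∂P
        ≤ ∫ ω, ‖θh s ω - θstar‖ ^ 2 ∂P
          + 2 * η s * ∑ m, w m * ∑ i ∈ Icc 1 τ, ∫ ω, ⟪θstar - θh s ω, g s m i ω⟫_ℝ ∂P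
          + η s ^ 2 * (τ:ℝ) ^ 2 * G ^ 2 := by
      have iA : Integrable (fun ω => 2 * η s
          * ∑ m, w m * ∑ i ∈ Icc 1 τ, ⟪θstar - θh s ω, g s m i ω⟫_ℝ) P :=
        hmidint.const_mul _
      have iB : Integrable (fun ω => η s ^ 2
          * ((τ:ℝ) * ∑ m, w m * ∑ i ∈ Icc 1 τ, ‖g s m i ω‖ ^ 2)) P :=
        ((hGint s).const_mul _).const_mul _
      have h0 : ∫ ω, ‖θ (s+1) ω - θstar‖ ^ 2 ∂P
          ≤ ∫ ω, (‖θh s ω - θstar‖ ^ 2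
              + 2 * η s * ∑ m, w m * ∑ i ∈ Icc 1 τ, ⟪θstar - θh s ω, g s m i ω⟫_ℝ
              + η s ^ 2 * ((τ:ℝ) * ∑ m, w m * ∑ i ∈ Icc 1 τ, ‖g s m i ω‖ ^ 2)) ∂P :=
        integral_mono_ae (hθstar2int (s+1)) (((hθhstar2int s).add iA).add iB) hptw
      have eR : ∫ ω, (‖θh s ω - θstar‖ ^ 2
            + 2 * η s * ∑ m, w m * ∑ i ∈ Icc 1 τ, ⟪θstar - θh s ω, g s m i ω⟫_ℝ
            + η s ^ 2 * ((τ:ℝ) * ∑ m, w m * ∑ i ∈ Icc 1 τ, ‖g s m i ω‖ ^ 2)) ∂P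
          = (∫ ω, ‖θh s ω - θstar‖ ^ 2 ∂P)
            + 2 * η s * ∫ ω, ∑ m, w m * ∑ i ∈ Icc 1 τ, ⟪θstar - θh s ω, g s m i ω⟫_ℝ ∂P
            + η s ^ 2 * ((τ:ℝ)
                * ∫ ω, ∑ m, w m * ∑ i ∈ Icc 1 τ, ‖g s m i ω‖ ^ 2 ∂P) := by
        have iAB : Integrable (fun ω => ‖θh s ω - θstar‖ ^ 2
            + 2 * η s * ∑ m, w m * ∑ i ∈ Icc 1 τ, ⟪θstar - θh s ω, g s m i ω⟫_ℝ) P :=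
          (hθhstar2int s).add iA
        rw [integral_add iAB iB, integral_add (hθhstar2int s) iA,
          integral_const_mul, integral_const_mul, integral_const_mul]
      rw [eR] at h0
      have hswap : ∫ ω, ∑ m, w m * ∑ i ∈ Icc 1 τ, ⟪θstar - θh s ω, g s m i ω⟫_ℝ ∂P
          = ∑ m, w m * ∑ i ∈ Icc 1 τ, ∫ ω, ⟪θstar - θh s ω, g s m i ω⟫_ℝ ∂P := by
        rw [integral_finset_sum _ fun m _ =>
          (integrable_finset_sum _ fun i hi => hip0int s m i hi).const_mul _]
        refine Finset.sum_congr rfl fun m _ => ?_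
        rw [integral_const_mul, integral_finset_sum _ fun i hi => hip0int s m i hi]
      rw [hswap] at h0
      have hg3 := mul_le_mul_of_nonneg_left
        (mul_le_mul_of_nonneg_left (hGbd s) (by linarith : (0:ℝ) ≤ (τ:ℝ)))
        (sq_nonneg (η s))
      nlinarith [h0, hg3]
    -- combining the i = 1 and tail bounds
    have hmid : 2 * η s * ∑ m, w m * ∑ i ∈ Icc 1 τ,
          ∫ ω, ⟪θstar - θh s ω, g s m i ω⟫_ℝ ∂P
        ≤ -(μ * η s * ((τ:ℝ) - η s * ((τ:ℝ) - 1)))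
              * ∫ ω, ‖θh s ω - θstar‖ ^ 2 ∂P
          + 2 * η s * ((τ:ℝ) - 1) * Γ
          + (1 + μ * (1 - η s)) * η s ^ 2 * G ^ 2
              * ((τ:ℝ) * ((τ:ℝ) - 1) * (2 * (τ:ℝ) - 1) / 6)
          + η s ^ 2 * ((τ:ℝ) - 1) * G ^ 2 := by
      have hcard2 : ((Icc 2 τ).card : ℝ) = (τ:ℝ) - 1 := by
        have h : (Icc 2 τ).card = τ - 1 := by rw [Nat.card_Icc]; omega
        rw [h, Nat.cast_sub hτ, Nat.cast_one]
      have hS2 : ∑ i ∈ Icc 2 τ, ((i:ℝ) - 1) ^ 2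
          = (τ:ℝ) * ((τ:ℝ) - 1) * (2 * (τ:ℝ) - 1) / 6 := by
        have h := lfl_sum_split τ hτ (fun i => ((i:ℝ) - 1) ^ 2)
        rw [lfl_sum_sq τ] at h
        norm_num at h
        linarith
      have htail : ∀ m : Fin M,
          2 * η s * ∑ i ∈ Icc 2 τ, ∫ ω, ⟪θstar - θh s ω, g s m i ω⟫_ℝ ∂P
            ≤ 2 * η s * ((τ:ℝ) - 1) * (F m θstar - Fmin m)
              + (-((τ:ℝ) - 1) * (μ * η s * (1 - η s)
                  * ∫ ω, ‖θh s ω - θstar‖ ^ 2 ∂P)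
                + (1 + μ * (1 - η s)) * η s ^ 2 * G ^ 2
                    * ((τ:ℝ) * ((τ:ℝ) - 1) * (2 * (τ:ℝ) - 1) / 6)
                + ((τ:ℝ) - 1) * (η s ^ 2 * G ^ 2)) := by
        intro m
        calc 2 * η s * ∑ i ∈ Icc 2 τ, ∫ ω, ⟪θstar - θh s ω, g s m i ω⟫_ℝ ∂P
            = ∑ i ∈ Icc 2 τ, 2 * η s * ∫ ω, ⟪θstar - θh s ω, g s m i ω⟫_ℝ ∂P := by
              rw [Finset.mul_sum]
          _ ≤ ∑ i ∈ Icc 2 τ, (2 * η s * (F m θstar - Fmin m)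
                - μ * η s * (1 - η s) * ∫ ω, ‖θh s ω - θstar‖ ^ 2 ∂P
                + (1 + μ * (1 - η s)) * η s ^ 2 * ((i:ℝ) - 1) ^ 2 * G ^ 2
                + η s ^ 2 * G ^ 2) := Finset.sum_le_sum fun i hi => hT2 m i hi
          _ = ∑ i ∈ Icc 2 τ, ((2 * η s * (F m θstar - Fmin m)
                - μ * η s * (1 - η s) * ∫ ω, ‖θh s ω - θstar‖ ^ 2 ∂P
                + η s ^ 2 * G ^ 2)
                + (1 + μ * (1 - η s)) * η s ^ 2 * G ^ 2 * ((i:ℝ) - 1) ^ 2) :=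
              Finset.sum_congr rfl fun i _ => by ring
          _ = ((Icc 2 τ).card : ℝ) * (2 * η s * (F m θstar - Fmin m)
                - μ * η s * (1 - η s) * ∫ ω, ‖θh s ω - θstar‖ ^ 2 ∂P
                + η s ^ 2 * G ^ 2)
              + (1 + μ * (1 - η s)) * η s ^ 2 * G ^ 2
                  * ∑ i ∈ Icc 2 τ, ((i:ℝ) - 1) ^ 2 := by
              rw [Finset.sum_add_distrib, Finset.sum_const, nsmul_eq_mul, ← Finset.mul_sum]
          _ = _ := by rw [hcard2, hS2]; ring
      have h1 : 2 * η s * ∑ m, w m * ∑ i ∈ Icc 1 τ,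
            ∫ ω, ⟪θstar - θh s ω, g s m i ω⟫_ℝ ∂P
          = ∑ m, w m * (2 * η s * ∫ ω, ⟪θstar - θh s ω, g s m 1 ω⟫_ℝ ∂P)
            + ∑ m, w m * (2 * η s * ∑ i ∈ Icc 2 τ,
                ∫ ω, ⟪θstar - θh s ω, g s m i ω⟫_ℝ ∂P) := by
        rw [← Finset.sum_add_distrib, Finset.mul_sum]
        refine Finset.sum_congr rfl fun m _ => ?_
        rw [lfl_sum_split τ hτ (fun i => ∫ ω, ⟪θstar - θh s ω, g s m i ω⟫_ℝ ∂P)]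
        ring
      have h2 : ∑ m, w m * (2 * η s * ∫ ω, ⟪θstar - θh s ω, g s m 1 ω⟫_ℝ ∂P)
          ≤ 2 * η s * (-(μ/2) * ∫ ω, ‖θh s ω - θstar‖ ^ 2 ∂P) := by
        calc ∑ m, w m * (2 * η s * ∫ ω, ⟪θstar - θh s ω, g s m 1 ω⟫_ℝ ∂P)
            = 2 * η s * ∑ m, w m * ∫ ω, ⟪θstar - θh s ω, g s m 1 ω⟫_ℝ ∂P := by
              rw [Finset.mul_sum]
              exact Finset.sum_congr rfl fun m _ => by ring
          _ ≤ _ := mul_le_mul_of_nonneg_left hT1 (by linarith)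
      have h3 : ∑ m, w m * (2 * η s * ∑ i ∈ Icc 2 τ,
            ∫ ω, ⟪θstar - θh s ω, g s m i ω⟫_ℝ ∂P)
          ≤ 2 * η s * ((τ:ℝ) - 1) * Γ
            + (-((τ:ℝ) - 1) * (μ * η s * (1 - η s)
                * ∫ ω, ‖θh s ω - θstar‖ ^ 2 ∂P)
              + (1 + μ * (1 - η s)) * η s ^ 2 * G ^ 2
                  * ((τ:ℝ) * ((τ:ℝ) - 1) * (2 * (τ:ℝ) - 1) / 6)
              + ((τ:ℝ) - 1) * (η s ^ 2 * G ^ 2)) := by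
        calc ∑ m, w m * (2 * η s * ∑ i ∈ Icc 2 τ,
              ∫ ω, ⟪θstar - θh s ω, g s m i ω⟫_ℝ ∂P)
            ≤ ∑ m, w m * (2 * η s * ((τ:ℝ) - 1) * (F m θstar - Fmin m)
                + (-((τ:ℝ) - 1) * (μ * η s * (1 - η s)
                    * ∫ ω, ‖θh s ω - θstar‖ ^ 2 ∂P)
                  + (1 + μ * (1 - η s)) * η s ^ 2 * G ^ 2
                      * ((τ:ℝ) * ((τ:ℝ) - 1) * (2 * (τ:ℝ) - 1) / 6)
                  + ((τ:ℝ) - 1) * (η s ^ 2 * G ^ 2))) :=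
              Finset.sum_le_sum fun m _ => mul_le_mul_of_nonneg_left (htail m) (hw m)
          _ = ∑ m, (2 * η s * ((τ:ℝ) - 1) * (w m * F m θstar)
                - 2 * η s * ((τ:ℝ) - 1) * (w m * Fmin m)
                + w m * (-((τ:ℝ) - 1) * (μ * η s * (1 - η s)
                    * ∫ ω, ‖θh s ω - θstar‖ ^ 2 ∂P)
                  + (1 + μ * (1 - η s)) * η s ^ 2 * G ^ 2
                      * ((τ:ℝ) * ((τ:ℝ) - 1) * (2 * (τ:ℝ) - 1) / 6)
                  + ((τ:ℝ) - 1) * (η s ^ 2 * G ^ 2))) :=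
              Finset.sum_congr rfl fun m _ => by ring
          _ = 2 * η s * ((τ:ℝ) - 1) * (∑ m, w m * F m θstar)
              - 2 * η s * ((τ:ℝ) - 1) * (∑ m, w m * Fmin m)
              + (∑ m, w m) * (-((τ:ℝ) - 1) * (μ * η s * (1 - η s)
                  * ∫ ω, ‖θh s ω - θstar‖ ^ 2 ∂P)
                + (1 + μ * (1 - η s)) * η s ^ 2 * G ^ 2
                    * ((τ:ℝ) * ((τ:ℝ) - 1) * (2 * (τ:ℝ) - 1) / 6)
                + ((τ:ℝ) - 1) * (η s ^ 2 * G ^ 2)) := by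
              rw [Finset.sum_add_distrib, Finset.sum_sub_distrib, ← Finset.mul_sum,
                ← Finset.mul_sum, ← Finset.sum_mul]
          _ = _ := by rw [hw1, hΓ, hFstar]; ring
      rw [h1]
      have hfinal := add_le_add h2 h3
      nlinarith [hfinal]
    -- put everything together
    have hring : A s * ∫ ω, ‖θh s ω - θstar‖ ^ 2 ∂P
        + (η s ^ 2 * ((τ:ℝ) ^ 2 + (τ:ℝ) - 1) * G ^ 2
          + (1 + μ * (1 - η s)) * η s ^ 2 * G ^ 2
              * ((τ:ℝ) * ((τ:ℝ) - 1) * (2 * (τ:ℝ) - 1) / 6)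
          + 2 * η s * ((τ:ℝ) - 1) * Γ)
        = ∫ ω, ‖θh s ω - θstar‖ ^ 2 ∂P
          + (-(μ * η s * ((τ:ℝ) - η s * ((τ:ℝ) - 1)))
                * ∫ ω, ‖θh s ω - θstar‖ ^ 2 ∂P
            + 2 * η s * ((τ:ℝ) - 1) * Γ
            + (1 + μ * (1 - η s)) * η s ^ 2 * G ^ 2
                * ((τ:ℝ) * ((τ:ℝ) - 1) * (2 * (τ:ℝ) - 1) / 6)
            + η s ^ 2 * ((τ:ℝ) - 1) * G ^ 2)
          + η s ^ 2 * (τ:ℝ) ^ 2 * G ^ 2 := by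
      rw [hA s]; ring
    linarith [hexp1, hmid]
  -- FINAL INDUCTION
  intro t
  induction t with
  | zero => intro h; exact absurd h (by omega)
  | succ n ih =>
    intro _
    rcases Nat.eq_zero_or_pos n with hn | hn
    · subst hn
      have h1 := key 0
      rw [hY0] at h1
      have h2 : (∏ i ∈ Finset.range 1, A i) = A 0 := by simp
      have h3 : ∑ j ∈ Finset.range 1, B j * ∏ i ∈ Finset.Ico (j+1) 1, A i = B 0 := by simp
      rw [h2, h3, hB0]
      linarith [h1]
    · have ih2 := ih hn
      have h1 := key n
      have h2 := hquant n hn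
      have hAn := hA0 n
      have h3 := mul_le_mul_of_nonneg_left h2 hAn
      have h4 := mul_le_mul_of_nonneg_left ih2 hAn
      have hq₁R : ((q₁:ℝ)) ≠ 0 := Nat.cast_ne_zero.mpr (by omega)
      have hBn : B n = A n * (ε * d / (4 * q₁ ^ 2) * (η (n-1) ^ 2 * (τ:ℝ) ^ 2 * G ^ 2))
          + (η n ^ 2 * ((τ:ℝ) ^ 2 + (τ:ℝ) - 1) * G ^ 2
            + (1 + μ * (1 - η n)) * η n ^ 2 * G ^ 2
                * ((τ:ℝ) * ((τ:ℝ) - 1) * (2 * (τ:ℝ) - 1) / 6)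
            + 2 * η n * ((τ:ℝ) - 1) * Γ) := by
        rw [hB n hn]
        field_simp
        ring
      have halg : A n * ((∏ i ∈ Finset.range n, A i) * ‖θ0 - θstar‖ ^ 2
            + ∑ j ∈ Finset.range n, B j * ∏ i ∈ Finset.Ico (j+1) n, A i) + B n
          = (∏ i ∈ Finset.range (n+1), A i) * ‖θ0 - θstar‖ ^ 2
            + ∑ j ∈ Finset.range (n+1), B j * ∏ i ∈ Finset.Ico (j+1) (n+1), A i := by
        rw [Finset.prod_range_succ, Finset.sum_range_succ]
        have hI : ∀ j ∈ Finset.range n, B j * ∏ i ∈ Finset.Ico (j+1) (n+1), A i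
            = A n * (B j * ∏ i ∈ Finset.Ico (j+1) n, A i) := by
          intro j hj
          rw [Finset.prod_Ico_succ_top (Finset.mem_range.1 hj)]
          ring
        rw [Finset.sum_congr rfl hI, ← Finset.mul_sum]
        have hIe : ∏ i ∈ Finset.Ico (n+1) (n+1), A i = 1 := by simp
        rw [hIe]
        ring
      rw [← halg, hBn]
      nlinarith [h1, h3, h4]
end
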